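/- (Correctness of POLYNOMIAL.) Let rgt and p be distinct registers, n ≥ 1, and let POW^n = NORMAL rgt {FOR rgt {FOR rgt {… {FOR rgt {PUSH[1] p}}…}}} with n nested FOR rgt iterations. Then for every store φ: ⟨POW^n, (φ, 0)⟩ ⇓ (φ[p → s ++ φ(p)], 0) where s is a stack of |φ(rgt)|^n copies of 1. Consequently, for every c ≥ 1, the sequential composition POW^n;…;POW^n of c copies of POW^n satisfies ⟨POW^n;…;POW^n, (φ, 0)⟩ ⇓ (φ[p → s' ++ φ(p)], 0) where s' is a stack of c·|φ(rgt)|^n copies of 1. -/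

import Mathlib

set_option linter.unusedVariables false

namespace ForNo

/-- Registers. -/
abbrev Reg := ℕ
/-- Stacks of natural numbers; the head is the top. -/
abbrev Stack := List ℕ
/-- Stores map registers to stacks. -/
abbrev Store := Reg → Stack
/-- A state is a store together with an error counter. -/
abbrev FState := Store × ℕ

/-- The store mapping every register to the empty stack. -/
def emptyStore : Store := fun _ => []

/-- Store update. -/
def upd (φ : Store) (x : Reg) (s : Stack) : Store := fun y => if y = x then s else φ y

/-- Counter-guarded push operation. -/
def pushOp (n : ℕ) : Stack × ℕ → Stack × ℕ
  | (s, 0) => (n :: s, 0)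
  | (s, c + 1) => if s.head? = some n then (s, c + 1) else (s, c)

/-- Counter-guarded pop operation. -/
def popOp (n : ℕ) : Stack × ℕ → Stack × ℕ
  | (s, c) =>
      if s.head? = some n then
        match c with
        | 0 => (s.tail, 0)
        | c + 1 => (s, c + 1)
      else (s, c + 1)

mutual
  /-- Terms of the (raw) language. -/
  inductive Term : Type where
    | skip : Term
    | push : ℕ → Reg → Term
    | pop : ℕ → Reg → Term
    | seq : Term → Term → Term
    | ifeq : Reg → ℕ → Term → Term
    | normal : List Reg → Term → Term
    | fort : Reg → Bodies → Term
    | roft : Reg → Bodies → Term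
  /-- Nonempty lists of iteration bodies. -/
  inductive Bodies : Type where
    | single : Term → Bodies
    | cons : Term → Bodies → Bodies
end

/-- `ps.get i` is `P_min(i,m)` where `ps = P₀ … P_m`. -/
def Bodies.get : Bodies → ℕ → Term
  | .single t, _ => t
  | .cons t _, 0 => t
  | .cons _ ps, i + 1 => ps.get i

mutual
  /-- Big-step operational semantics `⟨T, ω⟩ ⇓ ω'`. -/
  inductive Eval : Term → FState → FState → Prop where
    | skip : ∀ ω, Eval .skip ω ω
    | seq : ∀ {t u : Term} {ω ω' ω'' : FState},
        Eval t ω ω' → Eval u ω' ω'' → Eval (.seq t u) ω ω''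
    | push : ∀ (n : ℕ) (x : Reg) (φ : Store) (c : ℕ),
        Eval (.push n x) (φ, c) (upd φ x (pushOp n (φ x, c)).1, (pushOp n (φ x, c)).2)
    | pop : ∀ (n : ℕ) (x : Reg) (φ : Store) (c : ℕ),
        Eval (.pop n x) (φ, c) (upd φ x (popOp n (φ x, c)).1, (popOp n (φ x, c)).2)
    | ifeq_true : ∀ {x n t} {φ : Store} {c : ℕ} {ω' : FState},
        (φ x).head? = some n → Eval t (φ, c) ω' → Eval (.ifeq x n t) (φ, c) ω'
    | ifeq_false : ∀ {x n t} (φ : Store) (c : ℕ),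
        (φ x).head? ≠ some n → Eval (.ifeq x n t) (φ, c) (φ, c)
    | normal : ∀ {xs t ω ω'}, Eval t ω ω' → Eval (.normal xs t) ω ω'
    | fort : ∀ {x ps ω ω'}, EvalList (ω.1 x) ps ω ω' → Eval (.fort x ps) ω ω'
    | roft : ∀ {x ps ω ω'}, EvalList (ω.1 x).reverse ps ω ω' → Eval (.roft x ps) ω ω'
  /-- Iteration judgment `⟦s, ps, ω⟧ ⇓ ω'`. -/
  inductive EvalList : Stack → Bodies → FState → FState → Prop where
    | nil : ∀ (ps : Bodies) (ω : FState), EvalList [] ps ω ω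
    | cons : ∀ {i : ℕ} {t : Stack} {ps : Bodies} {ω ω'' ω' : FState},
        Eval (ps.get i) ω ω'' → EvalList t ps ω'' ω' → EvalList (i :: t) ps ω ω'
end

mutual
  /-- The inversion map `−(·)` on terms. -/
  def Term.inv : Term → Term
    | .skip => .skip
    | .push n x => .pop n x
    | .pop n x => .push n x
    | .seq t u => .seq u.inv t.inv
    | .ifeq x n t => .ifeq x n t.inv
    | .normal xs t => .normal xs t.inv
    | .fort x ps => .roft x ps.inv
    | .roft x ps => .fort x ps.inv
  def Bodies.inv : Bodies → Bodies
    | .single t => .single t.inv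
    | .cons t ps => .cons t.inv ps.inv
end

mutual
  /-- `t.Writes y` holds iff some `PUSH`/`POP` occurring in `t` writes register `y`. -/
  def Term.Writes : Term → Reg → Prop
    | .skip, _ => False
    | .push _ x, y => x = y
    | .pop _ x, y => x = y
    | .seq t u, y => t.Writes y ∨ u.Writes y
    | .ifeq _ _ t, y => t.Writes y
    | .normal _ t, y => t.Writes y
    | .fort _ ps, y => ps.Writes y
    | .roft _ ps, y => ps.Writes y
  def Bodies.Writes : Bodies → Reg → Prop
    | .single t, y => t.Writes y
    | .cons t ps, y => t.Writes y ∨ ps.Writes y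
end

mutual
  /-- `t.Leads y` holds iff `y` leads some `FOR`/`ROF` iteration occurring in `t`. -/
  def Term.Leads : Term → Reg → Prop
    | .skip, _ => False
    | .push _ _, _ => False
    | .pop _ _, _ => False
    | .seq t u, y => t.Leads y ∨ u.Leads y
    | .ifeq _ _ t, y => t.Leads y
    | .normal _ t, y => t.Leads y
    | .fort x ps, y => x = y ∨ ps.Leads y
    | .roft x ps, y => x = y ∨ ps.Leads y
  def Bodies.Leads : Bodies → Reg → Prop
    | .single t, y => t.Leads y
    | .cons t ps, y => t.Leads y ∨ ps.Leads y
end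

mutual
  /-- `t.Mentions y` holds iff register `y` occurs in `t`. -/
  def Term.Mentions : Term → Reg → Prop
    | .skip, _ => False
    | .push _ x, y => x = y
    | .pop _ x, y => x = y
    | .seq t u, y => t.Mentions y ∨ u.Mentions y
    | .ifeq x _ t, y => x = y ∨ t.Mentions y
    | .normal xs t, y => y ∈ xs ∨ t.Mentions y
    | .fort x ps, y => x = y ∨ ps.Mentions y
    | .roft x ps, y => x = y ∨ ps.Mentions y
  def Bodies.Mentions : Bodies → Reg → Prop
    | .single t, y => t.Mentions y
    | .cons t ps, y => t.Mentions y ∨ ps.Mentions y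
end

mutual
  /-- The finite set of registers occurring in a term. -/
  def Term.regs : Term → Finset Reg
    | .skip => ∅
    | .push _ x => {x}
    | .pop _ x => {x}
    | .seq t u => t.regs ∪ u.regs
    | .ifeq x _ t => insert x t.regs
    | .normal xs t => xs.toFinset ∪ t.regs
    | .fort x ps => insert x ps.regs
    | .roft x ps => insert x ps.regs
  def Bodies.regs : Bodies → Finset Reg
    | .single t => t.regs
    | .cons t ps => t.regs ∪ ps.regs
end

mutual
  /-- Safe terms: generated by the grammar `S` (no `NORMAL`). -/
  def Term.Safe : Term → Prop
    | .skip => True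
    | .push _ _ => True
    | .pop _ _ => True
    | .seq t u => t.Safe ∧ u.Safe
    | .ifeq _ _ t => t.Safe
    | .normal _ _ => False
    | .fort _ ps => ps.Safe
    | .roft _ ps => ps.Safe
  def Bodies.Safe : Bodies → Prop
    | .single t => t.Safe
    | .cons t ps => t.Safe ∧ ps.Safe
end

/-- Raw terms: generated by the grammar `T` (iterations only inside `NORMAL` bodies,
which must be safe). -/
def Term.Raw : Term → Prop
  | .skip => True
  | .push _ _ => True
  | .pop _ _ => True
  | .seq t u => t.Raw ∧ u.Raw
  | .ifeq _ _ t => t.Raw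
  | .normal _ t => t.Safe
  | .fort _ _ => False
  | .roft _ _ => False

mutual
  /-- The read-only constraints (i) and (ii) defining membership in ForNo. -/
  def Term.WF : Term → Prop
    | .skip => True
    | .push _ _ => True
    | .pop _ _ => True
    | .seq t u => t.WF ∧ u.WF
    | .ifeq x _ t => t.WF ∧ ¬ t.Writes x
    | .normal xs t => t.WF ∧ (∀ x ∈ xs, ¬ t.Writes x) ∧ (∀ y, t.Leads y → y ∈ xs)
    | .fort x ps => ps.WF ∧ ¬ ps.Writes x
    | .roft x ps => ps.WF ∧ ¬ ps.Writes x
  def Bodies.WF : Bodies → Prop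
    | .single t => t.WF
    | .cons t ps => t.WF ∧ ps.WF
end

/-- A raw term is in ForNo if it satisfies the read-only constraints. -/
def InForNo (t : Term) : Prop := t.Raw ∧ t.WF

/-- `iterSeq t k` is the `k`-fold sequential composition `t;…;t` (`SKIP` for `k = 0`). -/
def iterSeq (t : Term) : ℕ → Term
  | 0 => .skip
  | 1 => t
  | n + 2 => .seq t (iterSeq t (n + 1))

/-- `mkBodiesAux g i k` is the list of bodies `g i, g (i+1), …, g (i+k)`. -/
def mkBodiesAux (g : ℕ → Term) : ℕ → ℕ → Bodies
  | i, 0 => .single (g i)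
  | i, k + 1 => .cons (g i) (mkBodiesAux g (i + 1) k)

/-- `mkBodies g k` is the list of bodies `g 0, g 1, …, g k`. -/
def mkBodies (g : ℕ → Term) (k : ℕ) : Bodies := mkBodiesAux g 0 k

/-- `COPY(x,y)` with bodies `PUSH[0] y, …, PUSH[k] y`. -/
def COPY (x y : Reg) (k : ℕ) : Term :=
  .normal [x] (.roft x (mkBodies (fun i => .push i y) k))

/-- `n` nested `FOR rgt` iterations around `PUSH[1] p`. -/
def powNest (rgt p : Reg) : ℕ → Term
  | 0 => .push 1 p
  | n + 1 => .fort rgt (.single (powNest rgt p n))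

/-- The term `POW^n`. -/
def POW (rgt p : Reg) (n : ℕ) : Term := .normal [rgt] (powNest rgt p n)

/-- The term `REMOVE-BLANKS` for tape alphabet codes `{0,…,n−1}` and
input alphabet codes `{0,…,m−1}`. -/
def REMOVEBLANKS (rgt g1 : Reg) (n m : ℕ) : Term :=
  .seq (.normal [rgt] (.roft rgt (mkBodies (fun i => .push i g1) (n - 1))))
       (.normal [g1]
         (.seq (.fort g1 (mkBodies (fun i => .pop i rgt) (n - 1)))
               (.roft g1 (mkBodies (fun i => if i < m then .push i rgt else .skip) m))))

mutual
  /-- Big-step semantics instrumented with the number of rule applications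
  in the derivation. -/
  inductive EvalN : ℕ → Term → FState → FState → Prop where
    | skip : ∀ ω, EvalN 1 .skip ω ω
    | seq : ∀ {k l : ℕ} {t u : Term} {ω ω' ω'' : FState},
        EvalN k t ω ω' → EvalN l u ω' ω'' → EvalN (k + l + 1) (.seq t u) ω ω''
    | push : ∀ (n : ℕ) (x : Reg) (φ : Store) (c : ℕ),
        EvalN 1 (.push n x) (φ, c) (upd φ x (pushOp n (φ x, c)).1, (pushOp n (φ x, c)).2)
    | pop : ∀ (n : ℕ) (x : Reg) (φ : Store) (c : ℕ),
        EvalN 1 (.pop n x) (φ, c) (upd φ x (popOp n (φ x, c)).1, (popOp n (φ x, c)).2)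
    | ifeq_true : ∀ {k x n t} {φ : Store} {c : ℕ} {ω' : FState},
        (φ x).head? = some n → EvalN k t (φ, c) ω' → EvalN (k + 1) (.ifeq x n t) (φ, c) ω'
    | ifeq_false : ∀ {x n t} (φ : Store) (c : ℕ),
        (φ x).head? ≠ some n → EvalN 1 (.ifeq x n t) (φ, c) (φ, c)
    | normal : ∀ {k xs t ω ω'}, EvalN k t ω ω' → EvalN (k + 1) (.normal xs t) ω ω'
    | fort : ∀ {k x ps ω ω'}, EvalListN k (ω.1 x) ps ω ω' → EvalN (k + 1) (.fort x ps) ω ω'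
    | roft : ∀ {k x ps ω ω'}, EvalListN k (ω.1 x).reverse ps ω ω' → EvalN (k + 1) (.roft x ps) ω ω'
  inductive EvalListN : ℕ → Stack → Bodies → FState → FState → Prop where
    | nil : ∀ (ps : Bodies) (ω : FState), EvalListN 1 [] ps ω ω
    | cons : ∀ {k l : ℕ} {i : ℕ} {t : Stack} {ps : Bodies} {ω ω'' ω' : FState},
        EvalN k (ps.get i) ω ω'' → EvalListN l t ps ω'' ω' →
        EvalListN (k + l + 1) (i :: t) ps ω ω'
end

/-! ### Turing machines -/

/-- Deterministic one-tape Turing machines with a semi-infinite tape, input/output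
alphabet `S` embedded in the tape alphabet `Γ`, and direction `Bool`
(`false` = left, `true` = right). -/
structure TM (S : Type) where
  Q : Type
  finQ : Fintype Q
  q0 : Q
  qhalt : Q
  Γ : Type
  finΓ : Fintype Γ
  decΓ : DecidableEq Γ
  blank : Γ
  embed : S → Γ
  embed_inj : Function.Injective embed
  blank_notin : ∀ a, embed a ≠ blank
  δ : Q → Γ → Q × Γ × Bool

namespace TM

variable {S : Type}

/-- Configurations `(u, q, v)`: left tape part (nearest cell first), current state,
right tape part starting with the scanned cell (no trailing blanks). -/
abbrev Config (M : TM S) : Type := List M.Γ × M.Q × List M.Γ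

/-- Remove the trailing blanks of a list. -/
def trim (M : TM S) (l : List M.Γ) : List M.Γ :=
  letI := M.decΓ
  (l.reverse.dropWhile (fun a => decide (a = M.blank))).reverse

/-- The single-step transition function. -/
def stepFn (M : TM S) (c : M.Config) : M.Config :=
  let u := c.1
  let q := c.2.1
  let v := c.2.2
  let a := v.headD M.blank
  let r := M.δ q a
  if r.2.2 then (r.2.1 :: u, r.1, v.tail)
  else (u.tail, r.1, M.trim (u.headD M.blank :: r.2.1 :: v.tail))

/-- Single-step transition relation `c ⇝ c'`. -/
def Step (M : TM S) (c c' : M.Config) : Prop := c.2.1 ≠ M.qhalt ∧ c' = M.stepFn c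

/-- `n`-step transition relation `c ⇝ⁿ c'`. -/
def Steps (M : TM S) : ℕ → M.Config → M.Config → Prop
  | 0 => fun c c' => c = c'
  | n + 1 => fun c c'' => ∃ c', M.Step c c' ∧ M.Steps n c' c''

/-- The initial configuration on input `w`. -/
def init (M : TM S) (w : List S) : M.Config := ([], M.q0, w.map M.embed)

/-- `M` is a polynomial-time Turing machine. -/
def PTime (M : TM S) : Prop :=
  ∃ a b : ℕ, 0 < a ∧ 0 < b ∧ ∀ w : List S,
    ∃ k ≤ a * w.length ^ b, ∃ c : M.Config, M.Steps k (M.init w) c ∧ c.2.1 = M.qhalt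

end TM

/-- `f` is computable in polynomial time. -/
def FPTime {S : Type} (f : List S → List S) : Prop :=
  ∃ M : TM S, M.PTime ∧
    ∀ w : List S, ∃ k : ℕ, M.Steps k (M.init w) ([], M.qhalt, (f w).map M.embed)

/-- `f` is honest: the input length is polynomially bounded in the output length. -/
def Honest {S : Type} (f : List S → List S) : Prop :=
  ∃ q : Polynomial ℕ, ∀ x : List S, x.length ≤ q.eval (f x).length

/-! ### Encodings and computed functions -/

/-- An encoding of a finite alphabet `S`: a bijection onto `{0, …, |S| − 1}`. -/
structure Encoding (S : Type) [Fintype S] where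
  enc : S → ℕ
  inj : Function.Injective enc
  lt : ∀ a, enc a < Fintype.card S

/-- Encoding of strings as stacks. -/
def Encoding.encStr {S : Type} [Fintype S] (e : Encoding S) (w : List S) : Stack :=
  w.map e.enc

/-- `T` (with input register `rin` and output register `rout`) computes `f`. -/
def Computes {S : Type} [Fintype S] (e : Encoding S) (T : Term) (rin rout : Reg)
    (f : List S → List S) : Prop :=
  ∀ x : List S, ∃ φ : Store,
    Eval T (upd emptyStore rin (e.encStr x), 0) (φ, 0) ∧ φ rout = e.encStr (f x)

/-- `T` computes `f` with zero-garbage. -/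
def ComputesZG {S : Type} [Fintype S] (e : Encoding S) (T : Term) (rin rout : Reg)
    (f : List S → List S) : Prop :=
  ∀ x : List S, ∃ φ : Store,
    Eval T (upd emptyStore rin (e.encStr x), 0) (φ, 0) ∧ φ rout = e.encStr (f x) ∧
    ∀ y : Reg, y ≠ rout → φ y = []

/-! ### Simulation of Turing machines -/

/-- The register holding the left part of the tape. -/
def lftR : Reg := 0
/-- The register holding the current state. -/
def qR : Reg := 1
/-- The register holding the right part of the tape. -/
def rgtR : Reg := 2

/-- `σ` simulates configuration `c` (written `σ ≈ c`). -/
def Sim {S : Type} (M : TM S) (encΓ : M.Γ → ℕ) (encQ : M.Q → ℕ)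
    (σ : FState) (c : M.Config) : Prop :=
  σ.2 = 0 ∧
  σ.1 lftR = c.1.map encΓ ∧
  (σ.1 qR).head? = some (encQ c.2.1) ∧
  ∃ bs : Stack, (∀ b ∈ bs, b = encΓ M.blank) ∧ σ.1 rgtR = c.2.2.map encΓ ++ bs

/-- `σ` cleanly simulates configuration `c` (written `σ ≅ c`). -/
def SimClean {S : Type} (M : TM S) (encΓ : M.Γ → ℕ) (encQ : M.Q → ℕ)
    (σ : FState) (c : M.Config) : Prop :=
  σ.2 = 0 ∧
  σ.1 lftR = c.1.map encΓ ∧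
  (σ.1 qR).head? = some (encQ c.2.1) ∧
  σ.1 rgtR = c.2.2.map encΓ

/-- The hypotheses of the simulation setup: `encΓ` is a bijection of `Γ` onto
`{0,…,n−1}` giving non-input characters larger codes than input characters,
and `encQ` is an injective encoding of states. -/
def SimSetup {S : Type} (M : TM S) (encΓ : M.Γ → ℕ) (encQ : M.Q → ℕ) : Prop :=
  Function.Injective encΓ ∧
  (∀ a : M.Γ, encΓ a < @Fintype.card M.Γ M.finΓ) ∧
  (∀ a : M.Γ, (∀ s : S, M.embed s ≠ a) → ∀ s : S, encΓ (M.embed s) < encΓ a) ∧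
  Function.Injective encQ

end ForNo

/-! A term that pushes `f (φ rgt)` ones onto `p ≠ rgt`, run once per entry of `φ rgt` by
`FOR rgt`, pushes `|φ rgt| · f (φ rgt)` ones, since the count read from `rgt` never changes.
By induction on the nesting depth `POW^n` pushes `|φ rgt|^n` ones, and sequential composition
adds the counts. -/

namespace ForNo

theorem upd_apply_of_ne (φ : Store) {x y : Reg} (s : Stack) (h : y ≠ x) : upd φ x s y = φ y :=
  if_neg h

theorem upd_eq_self (φ : Store) (x : Reg) : upd φ x (φ x) = φ := by
  funext y
  by_cases hy : y = x <;> simp [upd, hy]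

theorem upd_append_upd_append (φ : Store) (x : Reg) (a b : Stack) :
    upd (upd φ x (a ++ φ x)) x (b ++ upd φ x (a ++ φ x) x) = upd φ x (b ++ a ++ φ x) := by
  funext y
  by_cases hy : y = x <;> simp [upd, hy]

def PushesOnes (t : Term) (r p : Reg) (f : Stack → ℕ) : Prop :=
  ∀ φ : Store, Eval t (φ, 0) (upd φ p (List.replicate (f (φ r)) 1 ++ φ p), 0)

section PushesOnes

variable {t u : Term} {r p : Reg} {f g : Stack → ℕ}

theorem pushesOnes_push (r p : Reg) : PushesOnes (.push 1 p) r p (fun _ => 1) := fun φ =>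
  Eval.push 1 p φ 0

theorem PushesOnes.eval_after (ht : PushesOnes t r p f) (hrp : r ≠ p) (φ : Store)
    (a : Stack) : Eval t (upd φ p (a ++ φ p), 0)
      (upd φ p (List.replicate (f (φ r)) 1 ++ a ++ φ p), 0) := by
  simpa only [upd_apply_of_ne _ _ hrp, upd_append_upd_append] using ht (upd φ p (a ++ φ p))

theorem PushesOnes.seq (ht : PushesOnes t r p f) (hu : PushesOnes u r p g) (hrp : r ≠ p) :
    PushesOnes (.seq t u) r p (fun s => g s + f s) := fun φ => by
  simpa only [List.replicate_add, List.append_assoc] using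
    Eval.seq (ht φ) (hu.eval_after hrp φ _)

theorem PushesOnes.evalList (ht : PushesOnes t r p f) (hrp : r ≠ p) (s : Stack) (φ : Store) :
    EvalList s (.single t) (φ, 0)
      (upd φ p (List.replicate (s.length * f (φ r)) 1 ++ φ p), 0) := by
  induction s generalizing φ with
  | nil =>
    rw [List.length_nil, zero_mul, List.replicate_zero, List.nil_append, upd_eq_self]
    exact EvalList.nil (.single t) (φ, 0)
  | cons i s ih =>
    have hrest := ih (upd φ p (List.replicate (f (φ r)) 1 ++ φ p))
    rw [upd_apply_of_ne _ _ hrp, upd_append_upd_append, ← List.replicate_add] at hrest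
    rw [List.length_cons, add_one_mul]
    exact EvalList.cons (ht φ) hrest

theorem PushesOnes.fort (ht : PushesOnes t r p f) (hrp : r ≠ p) :
    PushesOnes (.fort r (.single t)) r p (fun s => s.length * f s) := fun φ =>
  Eval.fort (ht.evalList hrp (φ r) φ)

theorem PushesOnes.normal (ht : PushesOnes t r p f) (xs : List Reg) :
    PushesOnes (.normal xs t) r p f := fun φ =>
  Eval.normal (ht φ)

theorem PushesOnes.iterSeq (ht : PushesOnes t r p f) (hrp : r ≠ p) :
    ∀ c : ℕ, PushesOnes (iterSeq t (c + 1)) r p (fun s => (c + 1) * f s)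
  | 0 => by simpa only [zero_add, one_mul, ForNo.iterSeq] using ht
  | c + 1 => by
    rw [ForNo.iterSeq]
    convert ht.seq (ht.iterSeq hrp c) hrp using 2 with s
    ring

end PushesOnes

theorem pushesOnes_powNest {rgt p : Reg} (hrp : rgt ≠ p) :
    ∀ n : ℕ, PushesOnes (powNest rgt p n) rgt p (fun s => s.length ^ n)
  | 0 => pushesOnes_push rgt p
  | n + 1 => by
    simpa only [pow_succ', powNest] using (pushesOnes_powNest hrp n).fort hrp

end ForNo

open ForNo in
/-- Correctness of POLYNOMIAL: `POW^n` pushes `|φ(rgt)|^n` copies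
of `1` onto `p`, and `c` sequential copies of `POW^n` push `c·|φ(rgt)|^n` copies. -/
theorem polynomial_correct (rgt p : Reg) (hrp : rgt ≠ p) (n : ℕ) (hn : 1 ≤ n) :
    (∀ φ : Store,
        Eval (POW rgt p n) (φ, 0)
          (upd φ p (List.replicate ((φ rgt).length ^ n) 1 ++ φ p), 0)) ∧
    (∀ c : ℕ, 1 ≤ c → ∀ φ : Store,
        Eval (iterSeq (POW rgt p n) c) (φ, 0)
          (upd φ p (List.replicate (c * (φ rgt).length ^ n) 1 ++ φ p), 0)) := by
  have hPOW : PushesOnes (POW rgt p n) rgt p (fun s => s.length ^ n) :=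
    (pushesOnes_powNest hrp n).normal [rgt]
  refine ⟨hPOW, fun c hc => ?_⟩
  obtain ⟨c, rfl⟩ := Nat.exists_eq_add_of_le' hc
  exact hPOW.iterSeq hrp c
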